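/- arXiv:2003.10015 — 4 statements merged into one kernel-verified Lean document; each statement's English description precedes it below -/
import Mathlib

section
/- In a reproducing kernel Hilbert space H of analytic functions on 𝔻 with bounded shift and dense polynomials, if θ ∈ H is both cyclic and H-inner, then conj(θ(0))·θ equals the reproducing kernel k_0 at the point 0; in particular any cyclic inner function is a unimodular-constant multiple of the normalized reproducing kernel at 0. -/
/-! The identities `⟪z^j θ, θ⟫ = δ_{j0}` and the reproducing property give
`⟪z^j θ, conj θ(0) • θ - k₀⟫ = δ_{j0} θ(0) - conj ((z^j θ)(0)) = 0` for every `j`, so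
`conj θ(0) • θ - k₀` is orthogonal to `[θ] = H` and vanishes. As `‖θ‖ = 1`, taking norms gives
`|θ(0)| = ‖k₀‖ ≠ 0`, and then `θ = (θ(0) / |θ(0)|) • (k₀ / ‖k₀‖)`. -/

open Metric Filter
open scoped ComplexConjugate

noncomputable section

/-- A reproducing kernel Hilbert space of analytic functions on the unit disk,
with bounded shift operator, dense polynomials, and reproducing kernel at 0. -/
structure DiskRKHS (H : Type*) [NormedAddCommGroup H] [InnerProductSpace ℂ H]
    [CompleteSpace H] where
  ev : H →ₗ[ℂ] (ℂ → ℂ)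
  ev_inj : Function.Injective ev
  analytic : ∀ f : H, AnalyticOn ℂ (ev f) (ball (0:ℂ) 1)
  shift : H →L[ℂ] H
  ev_shift : ∀ f : H, ∀ z ∈ ball (0:ℂ) 1, ev (shift f) z = z * ev f z
  one : H
  ev_one : ∀ z ∈ ball (0:ℂ) 1, ev one z = 1
  polyDense : Dense ((Submodule.span ℂ (Set.range fun n : ℕ => (shift ^ n) one) : Submodule ℂ H) : Set H)
  k0 : H
  k0_ne : k0 ≠ 0
  repro : ∀ h : H, (inner ℂ k0 h : ℂ) = ev h 0

namespace DiskRKHS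

variable {H : Type*} [NormedAddCommGroup H] [InnerProductSpace ℂ H] [CompleteSpace H]

/-- The subspace `f·P_n` of polynomial multiples of `f` of degree ≤ n. -/
def fP (R : DiskRKHS H) (f : H) (n : ℕ) : Submodule ℂ H :=
  Submodule.span ℂ (Set.range fun k : Fin (n+1) => (R.shift ^ (k : ℕ)) f)

/-- The closed shift-invariant subspace `[f]` generated by `f`. -/
def cyc (R : DiskRKHS H) (f : H) : Submodule ℂ H :=
  (Submodule.span ℂ (Set.range fun n : ℕ => (R.shift ^ n) f)).topologicalClosure

/-- The element `p(z) f(z)`, i.e. `p(S) f`. -/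
def pApply (R : DiskRKHS H) (p : Polynomial ℂ) (f : H) : H :=
  p.sum fun k a => a • ((R.shift ^ k) f)

/-- The normalized reproducing kernel `k̂₀ = k₀ / ‖k₀‖` at 0. -/
def normK0 (R : DiskRKHS H) : H := ‖R.k0‖⁻¹ • R.k0

/-- Membership in `K_{Sf} = H ⊖ [Sf]`, i.e. orthogonality to `z^k f` for all `k ≥ 1`. -/
def InKSf (R : DiskRKHS H) (f h : H) : Prop :=
  ∀ k : ℕ, 1 ≤ k → (inner ℂ ((R.shift ^ k) f) h : ℂ) = 0

end DiskRKHS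

/-- `φ` is the orthogonal projection of `g` onto the subspace `K`. -/
def IsProjOn {H : Type*} [NormedAddCommGroup H] [InnerProductSpace ℂ H] [CompleteSpace H]
    (K : Submodule ℂ H) (g φ : H) : Prop :=
  φ ∈ K ∧ ∀ w ∈ K, (inner ℂ w (g - φ) : ℂ) = 0

section Normalize

variable {𝕜 E : Type*} [RCLike 𝕜] [NormedAddCommGroup E] [NormedSpace 𝕜 E] [Module ℝ E]
  [IsScalarTower ℝ 𝕜 E]

theorem exists_norm_eq_one_eq_smul_normalize {θ k : E} {a : 𝕜} (hθ : ‖θ‖ = 1)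
    (hk : conj a • θ = k) (hk0 : k ≠ 0) : ∃ c : 𝕜, ‖c‖ = 1 ∧ θ = c • (‖k‖⁻¹ • k) := by
  have hnorm : ‖k‖ = ‖a‖ := by rw [← hk, norm_smul, hθ, mul_one, RCLike.norm_conj]
  have ha : a ≠ 0 := norm_ne_zero_iff.mp (hnorm ▸ norm_ne_zero_iff.mpr hk0)
  refine ⟨a / ‖a‖, by simp [ha], ?_⟩
  have hscal : a / ‖a‖ * (‖a‖ : 𝕜)⁻¹ * conj a = 1 := by
    have : (‖a‖ : 𝕜) ≠ 0 := mod_cast norm_ne_zero_iff.mpr ha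
    rw [div_mul_eq_mul_div, div_mul_eq_mul_div, mul_right_comm, RCLike.mul_conj]
    field_simp
  rw [hnorm, ← hk, RCLike.real_smul_eq_coe_smul (K := 𝕜), smul_smul, smul_smul,
    RCLike.ofReal_inv, hscal, one_smul]

end Normalize

theorem eq_zero_of_inner_eq_zero_of_topologicalClosure_span_eq_top {𝕜 E : Type*} [RCLike 𝕜]
    [NormedAddCommGroup E] [InnerProductSpace 𝕜 E] [CompleteSpace E] {s : Set E} {d : E}
    (hs : (Submodule.span 𝕜 s).topologicalClosure = ⊤) (hd : ∀ v ∈ s, inner 𝕜 v d = 0) :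
    d = 0 := by
  have hmem : d ∈ (Submodule.span 𝕜 s)ᗮ := by
    rw [Submodule.mem_orthogonal]
    exact fun v hv => (Submodule.span_le (p := LinearMap.ker ((innerₛₗ 𝕜).flip d))).mpr hd hv
  rwa [Submodule.topologicalClosure_eq_top_iff.mp hs, Submodule.mem_bot] at hmem

namespace DiskRKHS

variable {H : Type*} [NormedAddCommGroup H] [InnerProductSpace ℂ H] [CompleteSpace H]
  (R : DiskRKHS H)

theorem ev_shift_pow_apply_zero (f : H) {n : ℕ} (hn : n ≠ 0) : R.ev ((R.shift ^ n) f) 0 = 0 := by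
  obtain ⟨m, rfl⟩ := Nat.exists_eq_succ_of_ne_zero hn
  rw [pow_succ', mul_apply_eq_comp, R.ev_shift _ 0 (mem_ball_self one_pos), zero_mul]

theorem inner_k0_right (h : H) : inner ℂ h R.k0 = conj (R.ev h 0) := by
  rw [← R.repro, inner_conj_symm]

end DiskRKHS

theorem stmt1 {H : Type*} [NormedAddCommGroup H] [InnerProductSpace ℂ H] [CompleteSpace H]
    (R : DiskRKHS H) (θ : H)
    (hcyc : R.cyc θ = ⊤)
    (hinner : ∀ j : ℕ, (inner ℂ ((R.shift ^ j) θ) θ : ℂ) = if j = 0 then 1 else 0) :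
    (starRingEnd ℂ) (R.ev θ 0) • θ = R.k0 ∧
      ∃ c : ℂ, ‖c‖ = 1 ∧ θ = c • R.normK0 := by
  have hk0 : (starRingEnd ℂ) (R.ev θ 0) • θ = R.k0 := by
    refine sub_eq_zero.mp (eq_zero_of_inner_eq_zero_of_topologicalClosure_span_eq_top hcyc ?_)
    rintro _ ⟨n, rfl⟩
    rw [inner_sub_right, inner_smul_right, hinner n, R.inner_k0_right]
    rcases eq_or_ne n 0 with rfl | hn
    · simp
    · rw [R.ev_shift_pow_apply_zero θ hn, if_neg hn, map_zero, mul_zero, sub_zero]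
  have hθ : ‖θ‖ = 1 := by
    have h := hinner 0
    rw [pow_zero, one_apply_eq_self, if_pos rfl] at h
    rw [norm_eq_sqrt_re_inner (𝕜 := ℂ), h, RCLike.one_re, Real.sqrt_one]
  exact ⟨hk0, exists_norm_eq_one_eq_smul_normalize hθ hk0 R.k0_ne⟩
end
end

section
/- Let f ∈ H with f(0) ≠ 0 and let p_n* be the n-th optimal polynomial approximant to k̂_0/f, i.e., p_n* f is the orthogonal projection of k̂_0 onto f·P_n. If there is a power series φ(z) = Σ a_k z^k and an integer M such that p_n* equals the n-th Taylor truncation T_n(φ) for all n ≥ M, then p_n* = p_M* for all n ≥ M. -/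
open Metric Filter
open scoped ComplexConjugate

noncomputable section

/-! For `n ≥ M` the approximants `p_{n+1}*` and `p_n*` differ by `a_{n+1} z^{n+1}`. Subtracting the
normal equations of the two projections shows that `z^{n+1} f` is orthogonal to `f·P_n`; it is also
orthogonal to `k̂₀` because it vanishes at `0`. Testing the normal equation of `p_{n+1}*` against
`z^{n+1} f` then gives `a_{n+1} ‖z^{n+1} f‖² = 0`, and `z^{n+1} f ≠ 0` since `f(0) ≠ 0`. Hence
`a_k = 0` for all `k > M`, so all truncations beyond `M` coincide. -/

open scoped Topology

open PowerSeries in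
theorem PowerSeries.trunc_eq_trunc_of_coeff_eq_zero {R : Type*} [Semiring R] {φ : R⟦X⟧}
    {m n : ℕ} (hmn : m ≤ n) (h : ∀ k, m ≤ k → k < n → coeff k φ = 0) :
    trunc n φ = trunc m φ := by
  ext k
  simp only [coeff_trunc]
  split_ifs with hkn hkm hkm
  · rfl
  · exact h k (not_lt.mp hkm) hkn
  · omega
  · rfl

section Projection

variable {E : Type*} [NormedAddCommGroup E] [InnerProductSpace ℂ E] [CompleteSpace E]

theorem IsProjOn.eq_zero_of_add_smul {K K' : Submodule ℂ E} (hKK' : K ≤ K') {g φ v : E}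
    {c : ℂ} (hc : c ≠ 0) (hv : v ∈ K') (hvg : inner ℂ v g = 0)
    (hφ : IsProjOn K g φ) (hφ' : IsProjOn K' g (φ + c • v)) : v = 0 := by
  have hvK : ∀ w ∈ K, inner ℂ w v = 0 := by
    intro w hw
    have h := hφ'.2 w (hKK' hw)
    rw [sub_add_eq_sub_sub, inner_sub_right, hφ.2 w hw, inner_smul_right, zero_sub,
      neg_eq_zero] at h
    exact (mul_eq_zero.mp h).resolve_left hc
  have h := hφ'.2 v hv
  rw [inner_sub_right, inner_add_right, hvg, inner_smul_right, ← inner_conj_symm,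
    hvK φ hφ.1, map_zero, zero_add, zero_sub, neg_eq_zero] at h
  exact inner_self_eq_zero.mp ((mul_eq_zero.mp h).resolve_left hc)

end Projection

namespace DiskRKHS

variable {H : Type*} [NormedAddCommGroup H] [InnerProductSpace ℂ H] [CompleteSpace H]
  (R : DiskRKHS H)

theorem ev_shift_pow (m : ℕ) (h : H) {z : ℂ} (hz : z ∈ ball (0 : ℂ) 1) :
    R.ev ((R.shift ^ m) h) z = z ^ m * R.ev h z := by
  induction m with
  | zero => simp
  | succ m ih => rw [pow_succ', mul_apply_eq_comp, R.ev_shift _ z hz, ih]; ring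

theorem shift_pow_ne_zero {f : H} (hf : R.ev f 0 ≠ 0) (m : ℕ) : (R.shift ^ m) f ≠ 0 := by
  have hcont : ContinuousAt (R.ev f) 0 :=
    (R.analytic f).continuousOn.continuousAt (ball_mem_nhds 0 one_pos)
  have hnear : ∀ᶠ z in 𝓝[≠] (0 : ℂ), z ≠ 0 ∧ z ∈ ball (0 : ℂ) 1 ∧ R.ev f z ≠ 0 :=
    eventually_mem_nhdsWithin.and (nhdsWithin_le_nhds
      ((isOpen_ball.eventually_mem (mem_ball_self one_pos)).and (hcont.eventually_ne hf)))
  obtain ⟨z, hz0, hz, hfz⟩ := hnear.exists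
  intro h
  have := R.ev_shift_pow m f hz
  rw [h, map_zero, Pi.zero_apply] at this
  exact mul_ne_zero (pow_ne_zero m hz0) hfz this.symm

theorem inner_shift_pow_normK0 (f : H) {m : ℕ} (hm : m ≠ 0) :
    inner ℂ ((R.shift ^ m) f) R.normK0 = 0 := by
  rw [normK0, ← Complex.coe_smul, inner_smul_right, ← inner_conj_symm, R.repro,
    R.ev_shift_pow m f (mem_ball_self one_pos), zero_pow hm, zero_mul, map_zero, mul_zero]

theorem shift_pow_mem_fP (f : H) {j n : ℕ} (hj : j ≤ n) : (R.shift ^ j) f ∈ R.fP f n :=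
  Submodule.subset_span ⟨⟨j, Nat.lt_succ_of_le hj⟩, rfl⟩

theorem fP_mono (f : H) {n m : ℕ} (h : n ≤ m) : R.fP f n ≤ R.fP f m :=
  Submodule.span_le.mpr <| Set.range_subset_iff.mpr fun k =>
    R.shift_pow_mem_fP f (Nat.le_trans (Nat.le_of_lt_succ k.isLt) h)

theorem pApply_add (p q : Polynomial ℂ) (f : H) :
    R.pApply (p + q) f = R.pApply p f + R.pApply q f :=
  Polynomial.sum_add_index p q _ (fun _ => zero_smul ℂ _) (fun _ _ _ => add_smul _ _ _)

theorem pApply_monomial (m : ℕ) (c : ℂ) (f : H) :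
    R.pApply (Polynomial.monomial m c) f = c • (R.shift ^ m) f :=
  Polynomial.sum_monomial_index c _ (zero_smul ℂ _)

end DiskRKHS

theorem stmt3_general {H : Type*} [NormedAddCommGroup H] [InnerProductSpace ℂ H] [CompleteSpace H]
    (R : DiskRKHS H) (f : H) (hf : R.ev f 0 ≠ 0) (p : ℕ → Polynomial ℂ)
    (hproj : ∀ n : ℕ, IsProjOn (R.fP f n) R.normK0 (R.pApply (p n) f))
    (a : ℕ → ℂ) (M : ℕ)
    (htrunc : ∀ n, M ≤ n → ∀ k : ℕ, (p n).coeff k = if k ≤ n then a k else 0) :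
    ∀ n, M ≤ n → p n = p M := by
  have hT : ∀ n, M ≤ n → p n = PowerSeries.trunc (n + 1) (PowerSeries.mk a) :=
    fun n hn => Polynomial.ext fun k => by
    simp only [htrunc n hn, PowerSeries.coeff_trunc, PowerSeries.coeff_mk, Nat.lt_succ_iff]
  have hcoeff : ∀ n, M ≤ n → a (n + 1) = 0 := by
    intro n hn
    by_contra hc
    refine R.shift_pow_ne_zero hf (n + 1) (IsProjOn.eq_zero_of_add_smul
      (R.fP_mono f n.le_succ) hc (R.shift_pow_mem_fP f le_rfl)
      (R.inner_shift_pow_normK0 f n.succ_ne_zero) (hproj n) ?_)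
    have h := hproj (n + 1)
    rwa [hT (n + 1) (hn.trans n.le_succ), PowerSeries.trunc_succ, PowerSeries.coeff_mk, ← hT n hn,
      R.pApply_add, R.pApply_monomial] at h
  intro n hn
  rw [hT n hn, hT M le_rfl]
  refine PowerSeries.trunc_eq_trunc_of_coeff_eq_zero (by omega) fun k hMk _ => ?_
  obtain ⟨j, rfl⟩ : ∃ j, k = j + 1 := ⟨k - 1, by omega⟩
  rw [PowerSeries.coeff_mk, hcoeff j (by omega)]

theorem stmt3 {H : Type*} [NormedAddCommGroup H] [InnerProductSpace ℂ H] [CompleteSpace H]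
    (R : DiskRKHS H) (f : H) (hf : R.ev f 0 ≠ 0) (p : ℕ → Polynomial ℂ)
    (hdeg : ∀ n : ℕ, (p n).degree ≤ n)
    (hproj : ∀ n : ℕ, IsProjOn (R.fP f n) R.normK0 (R.pApply (p n) f))
    (a : ℕ → ℂ) (M : ℕ)
    (htrunc : ∀ n, M ≤ n → ∀ k : ℕ, (p n).coeff k = if k ≤ n then a k else 0) :
    ∀ n, M ≤ n → p n = p M :=
  stmt3_general R f hf p hproj a M htrunc
end
end

section
/- Let f ∈ H with f(0) ≠ 0, let p_M*(z) = Σ_{k=0}^M a_k z^k with a_M ≠ 0, and suppose u := p_M* f / √((p_M* f)(0)) is H-inner and p_M* f is the orthogonal projection of k̂_0 onto f·P_M. Then ⟨z^{M+k} f, p_M* f⟩ = 0 for all k ≥ 1, and consequently p_M* f is the orthogonal projection of k̂_0 onto [f]. -/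
open Metric Filter
open scoped ComplexConjugate

noncomputable section

/-!
For `i ≥ 1` the function `zⁱ f` vanishes at `0`, so it is orthogonal to `k̂₀`, and the projection
hypothesis says `w ⟂ zⁱ f` for `1 ≤ i ≤ M`. Since `w = Σ aⱼ zʲ f` is `H`-inner, for every `k ≥ 1`
`0 = ⟨zᵏ w, w⟩ = Σⱼ conj aⱼ ⟨z^(k+j) f, w⟩`, a linear recurrence for `cᵢ = ⟨zⁱ f, w⟩` with leading
coefficient `conj a_M ≠ 0`; hence `cᵢ = 0` for all `i ≥ 1`. So `k̂₀ - w` is orthogonal to every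
`zⁿ f`, hence to their closed span `[f]`.
-/

theorem eq_zero_of_linear_recurrence {α : Type*} [Semiring α] [NoZeroDivisors α] {M : ℕ}
    (a : Fin (M+1) → α) (haM : a (Fin.last M) ≠ 0)
    (c : ℕ → α) (hinit : ∀ i < M, c i = 0) (hrec : ∀ k, ∑ j : Fin (M+1), a j * c (k + j) = 0) :
    ∀ i, c i = 0 := by
  intro i
  induction i using Nat.strong_induction_on with
  | _ i ih =>
    rcases lt_or_ge i M with hi | hi
    · exact hinit i hi
    obtain ⟨k, rfl⟩ := Nat.exists_eq_add_of_le' hi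
    have hlower : ∑ j : Fin M, a j.castSucc * c (k + j.castSucc) = 0 :=
      Finset.sum_eq_zero fun j _ => by rw [ih _ (by simp), mul_zero]
    have hrec_k := hrec k
    rw [Fin.sum_univ_castSucc, hlower, zero_add] at hrec_k
    simpa using (mul_eq_zero.mp hrec_k).resolve_left haM

theorem isProjOn_topologicalClosure_span {H ι : Type*} [NormedAddCommGroup H]
    [InnerProductSpace ℂ H] [CompleteSpace H] (v : ι → H) {g w : H}
    (hw : w ∈ Submodule.span ℂ (Set.range v)) (horth : ∀ i, (inner ℂ (v i) (g - w) : ℂ) = 0) :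
    IsProjOn (Submodule.span ℂ (Set.range v)).topologicalClosure g w := by
  refine ⟨Submodule.le_topologicalClosure _ hw, fun u hu => ?_⟩
  have hspan : Submodule.span ℂ (Set.range v) ≤ (ℂ ∙ (g - w))ᗮ := by
    rw [Submodule.span_le]
    rintro _ ⟨i, rfl⟩
    exact Submodule.mem_orthogonal_singleton_iff_inner_left.mpr (horth i)
  exact Submodule.mem_orthogonal_singleton_iff_inner_left.mp
    (Submodule.topologicalClosure_minimal _ hspan (Submodule.isClosed_orthogonal _) hu)

namespace DiskRKHS

variable {H : Type*} [NormedAddCommGroup H] [InnerProductSpace ℂ H] [CompleteSpace H]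
  (R : DiskRKHS H)

theorem ev_shift_pow_succ_zero (f : H) (n : ℕ) : R.ev ((R.shift ^ (n + 1)) f) 0 = 0 := by
  rw [pow_succ', mul_apply_eq_comp, R.ev_shift _ 0 (mem_ball_self one_pos), zero_mul]

theorem inner_shift_pow_succ_normK0 (f : H) (n : ℕ) :
    (inner ℂ ((R.shift ^ (n + 1)) f) R.normK0 : ℂ) = 0 := by
  have hk0 : (inner ℂ R.k0 ((R.shift ^ (n + 1)) f) : ℂ) = 0 := by
    rw [R.repro, R.ev_shift_pow_succ_zero]
  rw [normK0, inner_smul_right_eq_smul, inner_eq_zero_symm.mpr hk0, smul_zero]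

theorem fP_le_span (f : H) (n : ℕ) :
    R.fP f n ≤ Submodule.span ℂ (Set.range fun m : ℕ => (R.shift ^ m) f) :=
  Submodule.span_mono (Set.range_subset_iff.mpr fun k => ⟨k, rfl⟩)

theorem inner_shift_pow_sum_smul (f v : H) {M : ℕ} (a : Fin (M + 1) → ℂ) (k : ℕ) :
    (inner ℂ ((R.shift ^ k) (∑ j : Fin (M + 1), a j • (R.shift ^ (j : ℕ)) f)) v : ℂ) =
      ∑ j : Fin (M + 1), conj (a j) * inner ℂ ((R.shift ^ (k + j)) f) v := by
  rw [map_sum, sum_inner]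
  refine Finset.sum_congr rfl fun j _ => ?_
  rw [map_smul, ← mul_apply_eq_comp, ← pow_add, inner_smul_left]

end DiskRKHS

theorem stmt7_general {H : Type*} [NormedAddCommGroup H] [InnerProductSpace ℂ H] [CompleteSpace H]
    (R : DiskRKHS H) (f : H) (M : ℕ) (a : Fin (M+1) → ℂ)
    (haM : a (Fin.last M) ≠ 0)
    (w : H) (hw : w = ∑ k : Fin (M+1), a k • ((R.shift ^ (k : ℕ)) f))
    (hinner : ∀ j : ℕ, (inner ℂ ((R.shift ^ j) w) w : ℂ) = if j = 0 then R.ev w 0 else 0)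
    (hproj : IsProjOn (R.fP f M) R.normK0 w) :
    (∀ k : ℕ, 1 ≤ k → (inner ℂ ((R.shift ^ (M + k)) f) w : ℂ) = 0) ∧
      IsProjOn (R.cyc f) R.normK0 w := by
  obtain ⟨hw_mem, hw_orth⟩ := hproj
  have hinit : ∀ i < M, (inner ℂ ((R.shift ^ (i + 1)) f) w : ℂ) = 0 := fun i hi => by
    have := hw_orth _ (Submodule.subset_span ⟨⟨i + 1, by omega⟩, rfl⟩)
    rwa [inner_sub_right, R.inner_shift_pow_succ_normK0, zero_sub, neg_eq_zero] at this
  have hrec : ∀ k, ∑ j : Fin (M + 1),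
      conj (a j) * (inner ℂ ((R.shift ^ (k + (j : ℕ) + 1)) f) w : ℂ) = 0 := fun k => by
    have := hinner (k + 1)
    conv_lhs at this => rw [hw, R.inner_shift_pow_sum_smul]
    simpa only [add_right_comm k 1, ← hw, Nat.add_one_ne_zero, if_false] using this
  have hvanish := eq_zero_of_linear_recurrence (conj ∘ a) (by simpa using haM)
    (fun n => (inner ℂ ((R.shift ^ (n + 1)) f) w : ℂ)) hinit hrec
  refine ⟨fun k hk => ?_, isProjOn_topologicalClosure_span _ (R.fP_le_span f M hw_mem) ?_⟩
  · obtain ⟨k, rfl⟩ := Nat.exists_eq_add_of_le' hk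
    exact hvanish (M + k)
  · rintro (_ | n)
    · exact hw_orth _ (Submodule.subset_span ⟨0, rfl⟩)
    · rw [inner_sub_right, R.inner_shift_pow_succ_normK0, hvanish, sub_zero]

theorem stmt7 {H : Type*} [NormedAddCommGroup H] [InnerProductSpace ℂ H] [CompleteSpace H]
    (R : DiskRKHS H) (f : H) (hf : R.ev f 0 ≠ 0) (M : ℕ) (a : Fin (M+1) → ℂ)
    (haM : a (Fin.last M) ≠ 0)
    (w : H) (hw : w = ∑ k : Fin (M+1), a k • ((R.shift ^ (k : ℕ)) f))
    (hinner : ∀ j : ℕ, (inner ℂ ((R.shift ^ j) w) w : ℂ) = if j = 0 then R.ev w 0 else 0)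
    (hproj : IsProjOn (R.fP f M) R.normK0 w) :
    (∀ k : ℕ, 1 ≤ k → (inner ℂ ((R.shift ^ (M + k)) f) w : ℂ) = 0) ∧
      IsProjOn (R.cyc f) R.normK0 w :=
  stmt7_general R f M a haM w hw hinner hproj
end
end

section
/- Let f, g ∈ H with ⟨f, g⟩ ≠ 0 and let q_M* be the M-th optimal polynomial approximant to g/f. If q_M* f ∈ K_{Sf} (i.e., ⟨q_M* f, z^k f⟩ = 0 for all k ≥ 1), then q_M* f/‖q_M* f‖ is H-inner. -/
open Metric Filter
open scoped ComplexConjugate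

noncomputable section

open scoped InnerProductSpace

section ShiftOrthogonality

variable {E : Type*} [NormedAddCommGroup E] [InnerProductSpace ℂ E]

theorem inner_pow_apply_eq_zero_of_mem_span {T : E →L[ℂ] E} {f w : E}
    (hK : ∀ k, 1 ≤ k → ⟪(T ^ k) f, w⟫_ℂ = 0) {v : E}
    (hv : v ∈ Submodule.span ℂ (Set.range fun k => (T ^ k) f)) {j : ℕ} (hj : 1 ≤ j) :
    ⟪(T ^ j) v, w⟫_ℂ = 0 := by
  induction hv using Submodule.span_induction with
  | mem x hx =>
    obtain ⟨k, rfl⟩ := hx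
    rw [← mul_apply_eq_comp, ← pow_add]
    exact hK _ (by omega)
  | zero => simp
  | add x y _ _ hx hy => rw [map_add, inner_add_left, hx, hy, add_zero]
  | smul c x _ hx => rw [map_smul, inner_smul_left, hx, mul_zero]

theorem inner_pow_apply_normalize {T : E →L[ℂ] E} {w : E} (hw : w ≠ 0)
    (horth : ∀ j, 1 ≤ j → ⟪(T ^ j) w, w⟫_ℂ = 0) (j : ℕ) :
    ⟪(T ^ j) (‖w‖⁻¹ • w), ‖w‖⁻¹ • w⟫_ℂ = if j = 0 then 1 else 0 := by
  rcases Nat.eq_zero_or_pos j with rfl | hj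
  · have h_unit : ‖‖w‖⁻¹ • w‖ = 1 := by
      rw [norm_smul, norm_inv, norm_norm, inv_mul_cancel₀ (norm_ne_zero_iff.2 hw)]
    simp [inner_self_eq_norm_sq_to_K, h_unit]
  · rw [if_neg hj.ne', RCLike.real_smul_eq_coe_smul (K := ℂ), map_smul, inner_smul_left,
      inner_smul_right, horth j hj, mul_zero, mul_zero]

end ShiftOrthogonality

theorem IsProjOn.ne_zero {E : Type*} [NormedAddCommGroup E] [InnerProductSpace ℂ E]
    [CompleteSpace E] {K : Submodule ℂ E} {g w f : E} (hw : IsProjOn K g w) (hf : f ∈ K)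
    (hgf : ⟪g, f⟫_ℂ ≠ 0) : w ≠ 0 := by
  rintro rfl
  have h := hw.2 f hf
  rw [sub_zero] at h
  exact hgf (inner_eq_zero_symm.mp h)

namespace DiskRKHS

variable {H : Type*} [NormedAddCommGroup H] [InnerProductSpace ℂ H] [CompleteSpace H]

theorem fP_le_span_range (R : DiskRKHS H) (f : H) (n : ℕ) :
    R.fP f n ≤ Submodule.span ℂ (Set.range fun k => (R.shift ^ k) f) :=
  Submodule.span_mono <| Set.range_subset_iff.2 fun k => ⟨k, rfl⟩

theorem self_mem_fP (R : DiskRKHS H) (f : H) (n : ℕ) : f ∈ R.fP f n :=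
  Submodule.subset_span ⟨0, by simp⟩

end DiskRKHS

theorem stmt12 {H : Type*} [NormedAddCommGroup H] [InnerProductSpace ℂ H] [CompleteSpace H]
    (R : DiskRKHS H) (f g : H) (hfg : (inner ℂ g f : ℂ) ≠ 0) (M : ℕ) (w : H)
    (hw : IsProjOn (R.fP f M) g w) (hK : R.InKSf f w) :
    ∀ j : ℕ, (inner ℂ ((R.shift ^ j) (‖w‖⁻¹ • w)) (‖w‖⁻¹ • w) : ℂ) =
      if j = 0 then 1 else 0 := by
  have hw_ne : w ≠ 0 := hw.ne_zero (R.self_mem_fP f M) hfg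
  exact inner_pow_apply_normalize hw_ne fun j hj =>
    inner_pow_apply_eq_zero_of_mem_span hK (R.fP_le_span_range f M hw.1) hj
end
end
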